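/- arXiv:1009.3972 — 3 statements merged into one kernel-verified Lean document; each statement's English description precedes it below -/
import Mathlib

section
/- If G is a quasitopological group, then G and τ(G) have the same open subgroups. -/
/-- A quasitopological group: inversion continuous, multiplication separately continuous. -/
def IsQuasiTopologicalGroup {G : Type*} [Group G] (t : TopologicalSpace G) : Prop :=
  @Continuous G G t t (fun x => x⁻¹) ∧
    (∀ g : G, @Continuous G G t t (fun x => g * x)) ∧
    (∀ g : G, @Continuous G G t t (fun x => x * g))

/-- The quotient topology coinduced by multiplication `μ : G × G → G`. -/
def cTop {G : Type*} [Group G] (t : TopologicalSpace G) : TopologicalSpace G :=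
  TopologicalSpace.coinduced (fun p : G × G => p.1 * p.2)
    (@instTopologicalSpaceProd G G t t)

/-- `s` is the finest group topology coarser than `t`. -/
def IsTau {G : Type*} [Group G] (t s : TopologicalSpace G) : Prop :=
  t ≤ s ∧ @IsTopologicalGroup G s _ ∧
    ∀ s' : TopologicalSpace G, t ≤ s' → @IsTopologicalGroup G s' _ → s ≤ s'


/-!
The `t`-open subgroups are closed under finite intersections and, by separate continuity of
multiplication, under conjugation; hence they form a neighbourhood basis of `1` for a group
topology that is coarser than `t` and in which each of them is open. Since `τ(G)` is finer than
every group topology coarser than `t`, it keeps all `t`-open subgroups open; conversely every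
`τ(G)`-open set is `t`-open.
-/

open Topology

namespace OpenSubgroup

variable {G : Type*} [Group G] [TopologicalSpace G] [SeparatelyContinuousMul G]

@[reducible]
def groupFilterBasis : GroupFilterBasis G where
  sets := Set.range ((↑) : OpenSubgroup G → Set G)
  nonempty := ⟨_, ⊤, rfl⟩
  inter_sets := by
    rintro _ _ ⟨K, rfl⟩ ⟨L, rfl⟩
    exact ⟨_, ⟨K ⊓ L, rfl⟩, subset_rfl⟩
  one' := by
    rintro _ ⟨K, rfl⟩
    exact K.one_mem
  mul' := by
    rintro _ ⟨K, rfl⟩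
    exact ⟨K, ⟨K, rfl⟩, Set.mul_subset_iff.mpr fun _ ha _ hb => K.mul_mem ha hb⟩
  inv' := by
    rintro _ ⟨K, rfl⟩
    exact ⟨K, ⟨K, rfl⟩, fun _ => K.inv_mem⟩
  conj' := by
    rintro g _ ⟨K, rfl⟩
    exact ⟨_, ⟨K.comap (MulAut.conj g).toMonoidHom (IsTopologicalGroup.continuous_conj g), rfl⟩,
      subset_rfl⟩

theorem le_groupFilterBasis_topology :
    ‹TopologicalSpace G› ≤ (groupFilterBasis : GroupFilterBasis G).topology := by
  intro U hU
  refine isOpen_iff_forall_mem_open.mpr fun x hx => ?_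
  obtain ⟨_, ⟨K, rfl⟩, hKU⟩ := (groupFilterBasis.nhds_hasBasis x).mem_iff.mp
    (@IsOpen.mem_nhds _ groupFilterBasis.topology _ _ hU hx)
  exact ⟨_, hKU, isOpenMap_mul_left x _ K.isOpen, 1, K.one_mem, mul_one x⟩

theorem isOpen_groupFilterBasis_topology (K : OpenSubgroup G) :
    IsOpen[(groupFilterBasis : GroupFilterBasis G).topology] (K : Set G) :=
  @Subgroup.isOpen_of_mem_nhds G _ groupFilterBasis.topology inferInstance (K : Subgroup G) 1
    (groupFilterBasis.mem_nhds_one ⟨K, rfl⟩)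

end OpenSubgroup

theorem IsQuasiTopologicalGroup.separatelyContinuousMul {G : Type*} [Group G]
    {t : TopologicalSpace G} (hq : IsQuasiTopologicalGroup t) :
    @SeparatelyContinuousMul G t _ :=
  @SeparatelyContinuousMul.mk G t _ (hq.2.1 _) (hq.2.2 _)

/-- A quasitopological group `G` and `τ(G)` have the same open subgroups. -/
theorem tau_same_open_subgroups {G : Type*} [Group G]
    (t τ : TopologicalSpace G) (hq : IsQuasiTopologicalGroup t) (hτ : IsTau t τ)
    (H : Subgroup G) :
    t.IsOpen (H : Set G) ↔ τ.IsOpen (H : Set G) := by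
  let := t
  have := hq.separatelyContinuousMul
  refine ⟨fun hH => ?_, fun hH => hτ.1 _ hH⟩
  have hτ_le : τ ≤ OpenSubgroup.groupFilterBasis.topology :=
    hτ.2.2 _ OpenSubgroup.le_groupFilterBasis_topology inferInstance
  exact hτ_le _ (OpenSubgroup.isOpen_groupFilterBasis_topology ⟨H, hH⟩)
end

section
/- For path connected X, the following are equivalent: (1) π₁^τ(X, x₀) is discrete; (2) π₁^{qtop}(X, x₀) is discrete; (3) every null-homotopic loop α ∈ Ω(X, x₀) has an open neighborhood in Ω(X, x₀) (compact-open topology) containing only null-homotopic loops. -/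
/-- The natural map from the loop space (with the compact-open topology) to the
fundamental group, sending a loop to its path-homotopy class. -/
noncomputable def piMk {X : Type*} [TopologicalSpace X] (x : X) (γ : Path x x) :
    FundamentalGroup X x :=
  @FundamentalGroup.fromPath X _ x (Quotient.mk (Path.Homotopic.setoid x x) γ)

/-- The quotient topology on the fundamental group, coinduced from the loop space
(with the compact-open topology): the topology of `π₁^{qtop}(X, x)`. -/
noncomputable def qTop (X : Type*) [TopologicalSpace X] (x : X) :
    TopologicalSpace (FundamentalGroup X x) :=
  TopologicalSpace.coinduced (piMk x) inferInstance

/-- `τ` is the finest group topology on `π₁(X, x)` making the natural map from the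
loop space continuous: the topology of `π₁^τ(X, x)`. -/
noncomputable def IsTauPi {X : Type*} [TopologicalSpace X] (x : X)
    (τ : TopologicalSpace (FundamentalGroup X x)) : Prop :=
  @IsTopologicalGroup (FundamentalGroup X x) τ _ ∧
    @Continuous (Path x x) (FundamentalGroup X x) _ τ (piMk x) ∧
    ∀ s : TopologicalSpace (FundamentalGroup X x),
      @IsTopologicalGroup (FundamentalGroup X x) s _ →
      @Continuous (Path x x) (FundamentalGroup X x) _ s (piMk x) → τ ≤ s


/-!
Right concatenation with `γ.symm` is a continuous self-map of the loop space pulling the set of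
null-homotopic loops back to the fibre of `piMk` over the class of `γ`. So `π₁^{qtop}` is
discrete as soon as the null-homotopic loops form an open set, which is condition (3). A discrete
topology is a group topology, so when `π₁^{qtop}` is discrete the finest group topology below it
is discrete as well; conversely `π₁^τ` is always finer than `π₁^{qtop}`.
-/

open Topology

section LoopSpace

variable {X : Type*} [TopologicalSpace X] {x : X}

theorem piMk_trans (β γ : Path x x) : piMk x (β.trans γ) = piMk x γ * piMk x β := rfl

theorem piMk_symm (γ : Path x x) : piMk x γ.symm = (piMk x γ)⁻¹ := rfl

theorem piMk_eq_one_iff (α : Path x x) :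
    piMk x α = 1 ↔
      Quotient.mk (Path.Homotopic.setoid x x) α =
        Quotient.mk (Path.Homotopic.setoid x x) (Path.refl x) := Iff.rfl

theorem piMk_surjective : Function.Surjective (piMk x) :=
  Path.Homotopic.Quotient.mk_surjective

theorem preimage_piMk_singleton (γ : Path x x) :
    piMk x ⁻¹' {piMk x γ} = (fun β : Path x x => β.trans γ.symm) ⁻¹' (piMk x ⁻¹' {1}) := by
  ext β
  simp only [Set.mem_preimage, Set.mem_singleton_iff, piMk_trans, piMk_symm, inv_mul_eq_one,
    eq_comm]

theorem qTop_eq_bot_iff : qTop X x = ⊥ ↔ IsOpen (piMk x ⁻¹' {1}) := by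
  refine ⟨fun h => isOpen_coinduced.mp (show IsOpen[qTop X x] {1} by rw [h]; trivial),
    fun h => eq_bot_of_singletons_open fun c => ?_⟩
  obtain ⟨γ, rfl⟩ := piMk_surjective c
  refine isOpen_coinduced.mpr ?_
  rw [preimage_piMk_singleton]
  exact h.preimage (Path.continuous_trans.comp (continuous_id.prodMk continuous_const))

theorem IsTauPi.eq_bot_iff {τ : TopologicalSpace (FundamentalGroup X x)} (hτ : IsTauPi x τ) :
    τ = ⊥ ↔ qTop X x = ⊥ := by
  obtain ⟨_, hcont, hfinest⟩ := hτ
  refine ⟨fun h => le_bot_iff.mp (h ▸ continuous_iff_coinduced_le.mp hcont), fun h => ?_⟩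
  let _ : TopologicalSpace (FundamentalGroup X x) := ⊥
  have : DiscreteTopology (FundamentalGroup X x) := ⟨rfl⟩
  exact le_bot_iff.mp (hfinest ⊥ inferInstance (continuous_iff_coinduced_le.mpr h.le))

end LoopSpace

theorem piTau_discrete_tfae_general {X : Type*} [TopologicalSpace X]
    (x : X) (τ : TopologicalSpace (FundamentalGroup X x)) (hτ : IsTauPi x τ) :
    (τ = ⊥ ↔ qTop X x = ⊥) ∧
      (qTop X x = ⊥ ↔
        ∀ α : Path x x,
          Quotient.mk (Path.Homotopic.setoid x x) α =
            Quotient.mk (Path.Homotopic.setoid x x) (Path.refl x) →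
          ∃ U : Set (Path x x), IsOpen U ∧ α ∈ U ∧
            ∀ β ∈ U, Quotient.mk (Path.Homotopic.setoid x x) β =
              Quotient.mk (Path.Homotopic.setoid x x) (Path.refl x)) := by
  refine ⟨hτ.eq_bot_iff, qTop_eq_bot_iff.trans ?_⟩
  simp only [isOpen_iff_forall_mem_open (s := piMk x ⁻¹' {1}), Set.mem_preimage,
    Set.mem_singleton_iff, piMk_eq_one_iff]
  exact forall₂_congr fun α _ =>
    ⟨fun ⟨U, hUN, hU, hαU⟩ => ⟨U, hU, hαU, hUN⟩, fun ⟨U, hU, hαU, hUN⟩ => ⟨U, hUN, hU, hαU⟩⟩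

/-- For path connected `X`, the following are equivalent: `π₁^τ(X, x₀)` is discrete;
`π₁^{qtop}(X, x₀)` is discrete; every null-homotopic loop has an open neighborhood in
the loop space consisting only of null-homotopic loops. -/
theorem piTau_discrete_tfae {X : Type*} [TopologicalSpace X] [PathConnectedSpace X]
    (x : X) (τ : TopologicalSpace (FundamentalGroup X x)) (hτ : IsTauPi x τ) :
    (τ = ⊥ ↔ qTop X x = ⊥) ∧
      (qTop X x = ⊥ ↔
        ∀ α : Path x x,
          Quotient.mk (Path.Homotopic.setoid x x) α =
            Quotient.mk (Path.Homotopic.setoid x x) (Path.refl x) →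
          ∃ U : Set (Path x x), IsOpen U ∧ α ∈ U ∧
            ∀ β ∈ U, Quotient.mk (Path.Homotopic.setoid x x) β =
              Quotient.mk (Path.Homotopic.setoid x x) (Path.refl x)) :=
  piTau_discrete_tfae_general x τ hτ
end

section
/- For any based spaces X and Y, the map φ : π₁^τ(X × Y) → π₁^τ(X) × π₁^τ(Y) induced by the projections, φ([(α, β)]) = ([α], [β]), is an isomorphism of topological groups. -/
/-! Projecting a loop to the two factors and pairing two loops are mutually inverse
homomorphisms `π₁(X × Y) ≃* π₁(X) × π₁(Y)`. Since `τ` is the finest group topology making the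
quotient map from the loop space continuous, a homomorphism from `π₁^τ` to a topological group
is continuous as soon as its composite with that quotient map is. This applies to the forward
map, whose composite is `γ ↦ ([pr₁ ∘ γ], [pr₂ ∘ γ])`, and to the restrictions of the inverse to
the two factors, whose composites are `γ ↦ [(γ, const)]` and `γ ↦ [(const, γ)]`; a homomorphism
out of a product group is the product of its two restrictions, hence continuous. -/

namespace Path

variable {X Y : Type*} [TopologicalSpace X] [TopologicalSpace Y]

theorem continuous_map {a b : X} {f : X → Y} (hf : Continuous f) :
    Continuous fun γ : Path a b => γ.map hf :=
  continuous_uncurry_iff.mp (hf.comp continuous_eval)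

theorem continuous_prod {a₁ a₂ : X} {b₁ b₂ : Y} :
    Continuous fun γ : Path a₁ a₂ × Path b₁ b₂ => γ.1.prod γ.2 :=
  continuous_uncurry_iff.mp <|
    show Continuous fun q : (Path a₁ a₂ × Path b₁ b₂) × unitInterval => (q.1.1 q.2, q.1.2 q.2)
    by fun_prop

end Path

theorem MonoidHom.continuous_of_continuous_comp_inl_inr {M N G : Type*} [Monoid M] [Monoid N]
    [Monoid G] [TopologicalSpace M] [TopologicalSpace N] [TopologicalSpace G] [ContinuousMul G]
    (f : M × N →* G) (hl : Continuous (f.comp (.inl M N))) (hr : Continuous (f.comp (.inr M N))) :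
    Continuous f := by
  have hf : ⇑f = fun q => f.comp (.inl M N) q.1 * f.comp (.inr M N) q.2 := by
    ext q
    simp [← map_mul]
  exact hf ▸ (hl.comp continuous_fst).mul (hr.comp continuous_snd)

namespace FundamentalGroup

variable {X Y : Type*} [TopologicalSpace X] [TopologicalSpace Y]

theorem map_piMk (f : C(X, Y)) (x : X) (γ : Path x x) :
    map f x (piMk x γ) = piMk (f x) (γ.map f.continuous) :=
  (Path.Homotopic.Quotient.mk_map γ f).symm

variable (x : X) (y : Y)

noncomputable def prodMulEquiv :
    FundamentalGroup (X × Y) (x, y) ≃* FundamentalGroup X x × FundamentalGroup Y y :=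
  { (map .fst (x, y)).prod (map .snd (x, y)) with
    invFun := fun q => fromPath (Path.Homotopic.prod q.1.toPath q.2.toPath)
    left_inv := fun a => Path.Homotopic.prod_projLeft_projRight a.toPath
    right_inv := fun q => Prod.ext (Path.Homotopic.projLeft_prod q.1.toPath q.2.toPath)
      (Path.Homotopic.projRight_prod q.1.toPath q.2.toPath) }

theorem prodMulEquiv_piMk (γ : Path ((x, y) : X × Y) (x, y)) :
    prodMulEquiv x y (piMk (x, y) γ) =
      (piMk x (γ.map continuous_fst), piMk y (γ.map continuous_snd)) :=
  Prod.ext (map_piMk _ _ γ) (map_piMk _ _ γ)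

theorem prodMulEquiv_symm_piMk (γ : Path x x) (δ : Path y y) :
    (prodMulEquiv x y).symm (piMk x γ, piMk y δ) = piMk (x, y) (γ.prod δ) :=
  rfl

end FundamentalGroup

theorem IsTauPi.continuous_monoidHom {X G : Type*} [TopologicalSpace X] {x : X}
    {τ : TopologicalSpace (FundamentalGroup X x)} (hτ : IsTauPi x τ) [Group G]
    [TopologicalSpace G] [IsTopologicalGroup G] (f : FundamentalGroup X x →* G)
    (hf : Continuous fun γ => f (piMk x γ)) : @Continuous _ _ τ _ f :=
  continuous_iff_le_induced.mpr <|
    hτ.2.2 _ (topologicalGroup_induced f) (continuous_induced_rng.mpr hf)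

/-- The map `π₁^τ(X × Y) → π₁^τ(X) × π₁^τ(Y)` induced by the projections is an
isomorphism of topological groups. -/
theorem piTau_prod {X Y : Type*} [TopologicalSpace X] [TopologicalSpace Y]
    (x : X) (y : Y)
    (τP : TopologicalSpace (FundamentalGroup (X × Y) (x, y)))
    (τX : TopologicalSpace (FundamentalGroup X x))
    (τY : TopologicalSpace (FundamentalGroup Y y))
    (hP : IsTauPi (x, y) τP) (hX : IsTauPi x τX) (hY : IsTauPi y τY) :
    ∃ e : FundamentalGroup (X × Y) (x, y) ≃*
        FundamentalGroup X x × FundamentalGroup Y y,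
      (∀ p : Path ((x, y) : X × Y) (x, y),
        e (piMk (x, y) p) =
          (piMk x (p.map continuous_fst), piMk y (p.map continuous_snd))) ∧
      @Continuous _ _ τP (@instTopologicalSpaceProd _ _ τX τY) e ∧
      @Continuous _ _ (@instTopologicalSpaceProd _ _ τX τY) τP e.symm := by
  let e := FundamentalGroup.prodMulEquiv x y
  have hPc := hP.2.1
  have hXc := hX.2.1
  have hYc := hY.2.1
  refine ⟨e, FundamentalGroup.prodMulEquiv_piMk x y, ?_, ?_⟩
  · let _ := τX; let _ := τY; have _ := hX.1; have _ := hY.1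
    refine hP.continuous_monoidHom e.toMonoidHom (Continuous.congr ?_ fun γ =>
      (FundamentalGroup.prodMulEquiv_piMk x y γ).symm)
    exact (hXc.comp (Path.continuous_map continuous_fst)).prodMk
      (hYc.comp (Path.continuous_map continuous_snd))
  · let _ := τX; let _ := τY; let _ := τP; have _ := hP.1
    refine e.symm.toMonoidHom.continuous_of_continuous_comp_inl_inr ?_ ?_
    · refine hX.continuous_monoidHom _ (Continuous.congr ?_ fun γ =>
        (FundamentalGroup.prodMulEquiv_symm_piMk x y γ (.refl y)).symm)
      exact hPc.comp (Path.continuous_prod.comp (continuous_id.prodMk continuous_const))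
    · refine hY.continuous_monoidHom _ (Continuous.congr ?_ fun δ =>
        (FundamentalGroup.prodMulEquiv_symm_piMk x y (.refl x) δ).symm)
      exact hPc.comp (Path.continuous_prod.comp (continuous_const.prodMk continuous_id))
end
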